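/- arXiv:1407.0449 — 2 statements merged into one kernel-verified Lean document; each statement's English description precedes it below -/
import Mathlib

section
/- Let Ψ : [0,∞) → [0,∞) be sub-root, i.e., nonnegative, nondecreasing, and r ↦ Ψ(r)/√r is nonincreasing on (0,∞). If Ψ is not identically zero on (0,∞), then Ψ has a unique positive fixed point r* with Ψ(r*) = r*, and moreover for all r ≥ r*, Ψ(r) ≤ r, with in addition Ψ continuous on (0,∞). -/
/-- A sub-root function (nonnegative, nondecreasing on `[0,∞)`, with
`r ↦ Ψ(r)/√r` nonincreasing on `(0,∞)`) that is not identically zero on `(0,∞)`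
has a unique positive fixed point `r*`; moreover `Ψ(r) ≤ r` for all `r ≥ r*`,
and `Ψ` is continuous on `(0,∞)`. -/
theorem stmt_6 (Ψ : ℝ → ℝ)
    (hnonneg : ∀ r, 0 ≤ r → 0 ≤ Ψ r)
    (hmono : ∀ r₁ r₂, 0 ≤ r₁ → r₁ ≤ r₂ → Ψ r₁ ≤ Ψ r₂)
    (hsubroot : ∀ r₁ r₂, 0 < r₁ → r₁ ≤ r₂ → Ψ r₂ / Real.sqrt r₂ ≤ Ψ r₁ / Real.sqrt r₁)
    (hnontriv : ∃ r, 0 < r ∧ Ψ r ≠ 0) :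
    (∃! r : ℝ, 0 < r ∧ Ψ r = r) ∧
    (∀ rstar : ℝ, (0 < rstar ∧ Ψ rstar = rstar) → ∀ r, rstar ≤ r → Ψ r ≤ r) ∧
    ContinuousOn Ψ (Set.Ioi (0 : ℝ)) := by
  -- Continuity on (0,∞)
  have hcont : ContinuousOn Ψ (Set.Ioi (0 : ℝ)) := by
    intro a ha
    simp only [Set.mem_Ioi] at ha
    have hsa : 0 < Real.sqrt a := Real.sqrt_pos.mpr ha
    set L : ℝ → ℝ := fun r => Ψ a * (Real.sqrt r / Real.sqrt a) with hL
    have hLcont : ContinuousAt L a := by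
      exact (((Real.continuous_sqrt.continuousAt).div_const _).const_mul _)
    have hLa : L a = Ψ a := by
      simp [hL, div_self hsa.ne']
    have hlow : ∀ r ∈ Set.Ioi (0:ℝ), min (Ψ a) (L r) ≤ Ψ r := by
      intro r hr
      simp only [Set.mem_Ioi] at hr
      rcases le_or_gt r a with h | h
      · refine le_trans (min_le_right _ _) ?_
        have h1 := hsubroot r a hr h
        have h2 := mul_le_mul_of_nonneg_right h1 (Real.sqrt_nonneg r)
        rw [div_mul_cancel₀ _ (Real.sqrt_pos.mpr hr).ne'] at h2
        have hLr : L r = Ψ a / Real.sqrt a * Real.sqrt r := by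
          simp only [hL]; ring
        rw [hLr]; exact h2
      · exact le_trans (min_le_left _ _) (hmono a r ha.le h.le)
    have hhigh : ∀ r ∈ Set.Ioi (0:ℝ), Ψ r ≤ max (Ψ a) (L r) := by
      intro r hr
      simp only [Set.mem_Ioi] at hr
      rcases le_or_gt r a with h | h
      · exact le_trans (hmono r a hr.le h) (le_max_left _ _)
      · refine le_trans ?_ (le_max_right _ _)
        have h1 := hsubroot a r ha h.le
        have h2 := mul_le_mul_of_nonneg_right h1 (Real.sqrt_nonneg r)
        rw [div_mul_cancel₀ _ (Real.sqrt_pos.mpr (ha.trans h)).ne'] at h2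
        have hLr : L r = Ψ a / Real.sqrt a * Real.sqrt r := by
          simp only [hL]; ring
        rw [hLr]; exact h2
    have hLt : Filter.Tendsto L (nhdsWithin a (Set.Ioi 0)) (nhds (Ψ a)) := by
      have := hLcont.continuousWithinAt (s := Set.Ioi (0:ℝ))
      rwa [ContinuousWithinAt, hLa] at this
    have hmint : Filter.Tendsto (fun r => min (Ψ a) (L r))
        (nhdsWithin a (Set.Ioi 0)) (nhds (Ψ a)) := by
      have := Filter.Tendsto.min (tendsto_const_nhds (x := Ψ a)) hLt
      simpa using this
    have hmaxt : Filter.Tendsto (fun r => max (Ψ a) (L r))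
        (nhdsWithin a (Set.Ioi 0)) (nhds (Ψ a)) := by
      have := Filter.Tendsto.max (tendsto_const_nhds (x := Ψ a)) hLt
      simpa using this
    exact tendsto_of_tendsto_of_tendsto_of_le_of_le' hmint hmaxt
      (Filter.eventually_of_mem self_mem_nhdsWithin hlow)
      (Filter.eventually_of_mem self_mem_nhdsWithin hhigh)
  -- key: if Ψ rstar = rstar with rstar > 0 then Ψ r ≤ r for r ≥ rstar
  have hle : ∀ rstar : ℝ, (0 < rstar ∧ Ψ rstar = rstar) → ∀ r, rstar ≤ r → Ψ r ≤ r := by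
    rintro rstar ⟨hrs, hfix⟩ r hr
    have hrpos : 0 < r := lt_of_lt_of_le hrs hr
    have h1 := hsubroot rstar r hrs hr
    rw [hfix] at h1
    have h2 : rstar / Real.sqrt rstar = Real.sqrt rstar := by
      rw [eq_comm, eq_div_iff (Real.sqrt_pos.mpr hrs).ne', Real.mul_self_sqrt hrs.le]
    rw [h2] at h1
    have h3 : Ψ r / Real.sqrt r ≤ Real.sqrt r :=
      h1.trans (Real.sqrt_le_sqrt hr)
    calc Ψ r = Ψ r / Real.sqrt r * Real.sqrt r := by
          rw [div_mul_cancel₀ _ (Real.sqrt_pos.mpr hrpos).ne']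
      _ ≤ Real.sqrt r * Real.sqrt r :=
          mul_le_mul_of_nonneg_right h3 (Real.sqrt_nonneg r)
      _ = r := Real.mul_self_sqrt hrpos.le
  refine ⟨?_, hle, hcont⟩
  -- existence
  obtain ⟨r₀, hr₀, hΨr₀⟩ := hnontriv
  have hΨr₀pos : 0 < Ψ r₀ := (hnonneg r₀ hr₀.le).lt_of_ne (Ne.symm hΨr₀)
  set c : ℝ := Ψ r₀ / Real.sqrt r₀ with hc
  have hcpos : 0 < c := div_pos hΨr₀pos (Real.sqrt_pos.mpr hr₀)
  set s : ℝ := min r₀ (c ^ 2 / 2) with hs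
  have hspos : 0 < s := lt_min hr₀ (by positivity)
  set b : ℝ := max r₀ (c ^ 2) with hb
  have hbpos : 0 < b := lt_of_lt_of_le hr₀ (le_max_left _ _)
  have hsb : s ≤ b := le_trans (min_le_left _ _) (le_max_left _ _)
  -- Ψ s ≥ s
  have hΨs : s ≤ Ψ s := by
    have h1 := hsubroot s r₀ hspos (min_le_left _ _)
    have h2 := mul_le_mul_of_nonneg_right h1 (Real.sqrt_nonneg s)
    rw [div_mul_cancel₀ _ (Real.sqrt_pos.mpr hspos).ne'] at h2
    -- h2 : c * sqrt s ≤ Ψ s  (after rewriting)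
    have h3 : Real.sqrt s * Real.sqrt s ≤ c * Real.sqrt s := by
      apply mul_le_mul_of_nonneg_right _ (Real.sqrt_nonneg s)
      have : s ≤ c ^ 2 := le_trans (min_le_right _ _) (by nlinarith)
      calc Real.sqrt s ≤ Real.sqrt (c ^ 2) := Real.sqrt_le_sqrt this
        _ = c := Real.sqrt_sq hcpos.le
    calc s = Real.sqrt s * Real.sqrt s := (Real.mul_self_sqrt hspos.le).symm
      _ ≤ c * Real.sqrt s := h3
      _ ≤ Ψ s := h2
  -- Ψ b ≤ b
  have hΨb : Ψ b ≤ b := by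
    have h1 := hsubroot r₀ b hr₀ (le_max_left _ _)
    have h2 := mul_le_mul_of_nonneg_right h1 (Real.sqrt_nonneg b)
    rw [div_mul_cancel₀ _ (Real.sqrt_pos.mpr hbpos).ne'] at h2
    have h3 : c * Real.sqrt b ≤ Real.sqrt b * Real.sqrt b := by
      apply mul_le_mul_of_nonneg_right _ (Real.sqrt_nonneg b)
      calc c = Real.sqrt (c ^ 2) := (Real.sqrt_sq hcpos.le).symm
        _ ≤ Real.sqrt b := Real.sqrt_le_sqrt (le_max_right _ _)
    calc Ψ b ≤ c * Real.sqrt b := h2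
      _ ≤ Real.sqrt b * Real.sqrt b := h3
      _ = b := Real.mul_self_sqrt hbpos.le
  -- IVT on h r = Ψ r - r
  have hsub : Set.Icc s b ⊆ Set.Ioi (0:ℝ) := fun x hx => lt_of_lt_of_le hspos hx.1
  have hcont' : ContinuousOn (fun r => Ψ r - r) (Set.Icc s b) :=
    ((hcont.mono hsub).sub continuousOn_id)
  have hmem : (0:ℝ) ∈ Set.Icc ((fun r => Ψ r - r) b) ((fun r => Ψ r - r) s) := by
    constructor <;> simp <;> linarith
  obtain ⟨r, hrmem, hrfix⟩ := intermediate_value_Icc' hsb hcont' hmem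
  have hrpos : 0 < r := lt_of_lt_of_le hspos hrmem.1
  have hfix : Ψ r = r := by
    have : Ψ r - r = 0 := hrfix
    linarith
  refine ⟨r, ⟨hrpos, hfix⟩, ?_⟩
  rintro y ⟨hy, hyfix⟩
  rcases le_total y r with h | h
  · -- y ≤ r : sqrt y ≥ sqrt r via nonincreasing g
    have h1 := hsubroot y r hy h
    rw [hyfix, hfix] at h1
    have h2 : ∀ t : ℝ, 0 < t → t / Real.sqrt t = Real.sqrt t := by
      intro t ht
      rw [eq_comm, eq_div_iff (Real.sqrt_pos.mpr ht).ne', Real.mul_self_sqrt ht.le]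
    rw [h2 r hrpos, h2 y hy] at h1
    have := Real.sqrt_le_sqrt h
    have : r ≤ y := by
      have h3 := Real.sqrt_le_sqrt h
      nlinarith [Real.sq_sqrt hy.le, Real.sq_sqrt hrpos.le, Real.sqrt_nonneg y, Real.sqrt_nonneg r]
    linarith
  · have h1 := hsubroot r y hrpos h
    rw [hyfix, hfix] at h1
    have h2 : ∀ t : ℝ, 0 < t → t / Real.sqrt t = Real.sqrt t := by
      intro t ht
      rw [eq_comm, eq_div_iff (Real.sqrt_pos.mpr ht).ne', Real.mul_self_sqrt ht.le]
    rw [h2 r hrpos, h2 y hy] at h1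
    have : y ≤ r := by
      nlinarith [Real.sq_sqrt hy.le, Real.sq_sqrt hrpos.le, Real.sqrt_nonneg y, Real.sqrt_nonneg r]
    linarith
end

section
/- Let Ψ be a sub-root function with unique positive fixed point r*. Then for every r > 0: Ψ(r) ≤ r if and only if r ≥ r*. -/
/-- For a sub-root function `Ψ` with positive fixed point `r*`:
for every `r > 0`, `Ψ(r) ≤ r` if and only if `r ≥ r*`. -/
theorem stmt_7 (Ψ : ℝ → ℝ) (rstar : ℝ)
    (hnonneg : ∀ r, 0 ≤ r → 0 ≤ Ψ r)
    (hmono : ∀ r₁ r₂, 0 ≤ r₁ → r₁ ≤ r₂ → Ψ r₁ ≤ Ψ r₂)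
    (hsubroot : ∀ r₁ r₂, 0 < r₁ → r₁ ≤ r₂ → Ψ r₂ / Real.sqrt r₂ ≤ Ψ r₁ / Real.sqrt r₁)
    (hrstar : 0 < rstar) (hfix : Ψ rstar = rstar) :
    ∀ r : ℝ, 0 < r → (Ψ r ≤ r ↔ rstar ≤ r) := by
  intro r hr
  have hsr : 0 < Real.sqrt r := Real.sqrt_pos.mpr hr
  have hss : 0 < Real.sqrt rstar := Real.sqrt_pos.mpr hrstar
  constructor
  · intro hΨ
    by_contra h
    push_neg at h
    have h' := hsubroot r rstar hr h.le
    rw [hfix, Real.div_sqrt] at h'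
    have h2 : Real.sqrt rstar ≤ Real.sqrt r := by
      calc Real.sqrt rstar ≤ Ψ r / Real.sqrt r := h'
        _ ≤ r / Real.sqrt r := by gcongr
        _ = Real.sqrt r := Real.div_sqrt
    have : rstar ≤ r := by
      nlinarith [Real.sq_sqrt hrstar.le, Real.sq_sqrt hr.le]
    linarith
  · intro h
    have h' := hsubroot rstar r hrstar h
    rw [hfix, Real.div_sqrt] at h'
    have h2 : Real.sqrt rstar ≤ Real.sqrt r := Real.sqrt_le_sqrt h
    have : Ψ r ≤ Real.sqrt rstar * Real.sqrt r := by
      rw [div_le_iff₀ hsr] at h'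
      linarith
    nlinarith [Real.sq_sqrt hr.le]
end
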